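/- arXiv:1411.3624 — 7 statements merged into one kernel-verified Lean document; each statement's English description precedes it below -/
import Mathlib

section
/- In the quotient algebra U/I (where U = Z⟨u_1,...,u_N⟩ is the free associative algebra and I is the two-sided ideal generated by the elements u_b(u_a u_c − u_c u_a) − (u_a u_c − u_c u_a)u_b for all a < b < c, together with all monomials containing a repeated variable), the noncommutative elementary symmetric functions e_i(u) and e_j(u) commute for all i, j. -/
open scoped Classical

noncomputable section

/-- The monomial (word) `u_{l_1} u_{l_2} ⋯ u_{l_n}` in the free associative algebra
`U = ℤ⟨u_1, …, u_N⟩`, whose variables are indexed by `Fin N`. -/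
def word (N : ℕ) (l : List (Fin N)) : FreeAlgebra ℤ (Fin N) :=
  (l.map (FreeAlgebra.ι ℤ)).prod

/-- The generating relations of the two-sided ideal `I_RKst`:
`u_b (u_a u_c - u_c u_a) - (u_a u_c - u_c u_a) u_b = 0` for `a < b < c`, together with
`w = 0` for every word `w` with a repeated letter. -/
inductive RKRel (N : ℕ) : FreeAlgebra ℤ (Fin N) → FreeAlgebra ℤ (Fin N) → Prop
  | knuth_rotation (a b c : Fin N) (hab : a < b) (hbc : b < c) :
      RKRel N
        (FreeAlgebra.ι ℤ b *
            (FreeAlgebra.ι ℤ a * FreeAlgebra.ι ℤ c - FreeAlgebra.ι ℤ c * FreeAlgebra.ι ℤ a) -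
          (FreeAlgebra.ι ℤ a * FreeAlgebra.ι ℤ c - FreeAlgebra.ι ℤ c * FreeAlgebra.ι ℤ a) *
            FreeAlgebra.ι ℤ b)
        0
  | repeated (l : List (Fin N)) (h : ¬ l.Nodup) : RKRel N (word N l) 0

/-- The noncommutative elementary symmetric function
`e_d(u) = ∑_{N ≥ i_1 > i_2 > ⋯ > i_d ≥ 1} u_{i_1} ⋯ u_{i_d}` (so `e_0 = 1` and `e_d = 0`
for `d > N`). -/
def esym (N d : ℕ) : FreeAlgebra ℤ (Fin N) :=
  ∑ f : Fin d → Fin N, if StrictAnti f then word N (List.ofFn f) else 0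

/-- The canonical projection `U → U/I_RKst`. -/
def pr (N : ℕ) : FreeAlgebra ℤ (Fin N) →ₐ[ℤ] RingQuot (RKRel N) :=
  RingQuot.mkAlgHom ℤ (RKRel N)

/-! Write `E_I(d)` for `e_d` in the letters of `I` and let the letter `c` exceed every letter
of `I`. Reading decreasing words from the left, `E_{I ∪ c}(d) = E_I(d) + u_c E_I(d-1)`. The letter
`u_c` passes through `E_I(d)` at the cost of `z = ∑_{a ∈ I} [u_a, u_c]`:
`E_I(d) u_c = u_c E_I(d) + z E_I(d-1)`, by induction on `I`, where the Knuth relations move `u_b`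
past `[u_a, u_c]` and words with a repeated letter kill the remaining terms. Since moreover
`u_c u_c = u_c z = 0`, the product `E_{I ∪ c}(i) E_{I ∪ c}(j)` equals
`E_I(i) E_I(j) + u_c (E_I(i) E_I(j-1) + E_I(i-1) E_I(j)) + z E_I(i-1) E_I(j-1)`, which is symmetric
in `i, j` once the `E_I` commute. -/

theorem commute_of_eq_add_mul_pred {A : Type*} [Ring A] {u z : A} {B C : ℤ → A}
    (huu : u * u = 0) (huz : u * z = 0) (hBu : ∀ d, B d * u = u * B d + z * B (d - 1))
    (hC : ∀ d, C d = B d + u * B (d - 1)) (hB : ∀ i j, Commute (B i) (B j)) (i j : ℤ) :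
    Commute (C i) (C j) := by
  have hu_B_u (d : ℤ) : u * B d * u = 0 := by
    rw [mul_assoc, hBu, mul_add, ← mul_assoc, ← mul_assoc, huu, huz, zero_mul, zero_mul, add_zero]
  have expand (i j : ℤ) : C i * C j =
      B i * B j + u * (B i * B (j - 1) + B (i - 1) * B j) + z * (B (i - 1) * B (j - 1)) :=
    calc C i * C j
        = B i * B j + B i * u * B (j - 1) + u * B (i - 1) * B j
            + u * B (i - 1) * u * B (j - 1) := by rw [hC, hC]; noncomm_ring
      _ = _ := by rw [hBu, hu_B_u]; noncomm_ring
  rw [Commute, SemiconjBy, expand, expand, (hB i j).eq, (hB i (j - 1)).eq, (hB (i - 1) j).eq,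
    (hB (i - 1) (j - 1)).eq, add_comm (B (j - 1) * B i)]

theorem Finset.sort_image_of_strictAnti {α : Type*} [LinearOrder α] {d : ℕ} {f : Fin d → α}
    (hf : StrictAnti f) : (Finset.univ.image f).sort (· ≥ ·) = List.ofFn f := by
  refine List.Perm.eq_of_sortedGE (Finset.sortedGT_sort _).sortedGE hf.antitone.sortedGE_ofFn ?_
  refine List.perm_of_nodup_nodup_toFinset_eq (Finset.sort_nodup _ _)
    (List.nodup_ofFn.mpr hf.injective) ?_
  ext x
  simp

theorem esym_eq_sum_powersetCard (N d : ℕ) :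
    esym N d = ∑ S ∈ Finset.univ.powersetCard d, word N (S.sort (· ≥ ·)) := by
  rw [esym, ← Finset.sum_filter]
  refine Finset.sum_bij (fun f _ => Finset.univ.image f) ?_ ?_ ?_ ?_
  · intro f hf
    rw [Finset.mem_filter] at hf
    simp [Finset.card_image_of_injective _ hf.2.injective]
  · intro f hf g hg hfg
    rw [Finset.mem_filter] at hf hg
    have := congrArg (fun S => S.sort (· ≥ ·)) hfg
    simp only [Finset.sort_image_of_strictAnti hf.2, Finset.sort_image_of_strictAnti hg.2] at this
    exact List.ofFn_injective this
  · intro S hS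
    have hS := (Finset.mem_powersetCard_univ.mp hS)
    refine ⟨fun k => S.orderEmbOfFin hS k.rev, ?_, ?_⟩
    · simp only [Finset.mem_filter, Finset.mem_univ, true_and]
      exact (S.orderEmbOfFin hS).strictMono.comp_strictAnti Fin.rev_strictAnti
    · rw [← Finset.coe_inj, Finset.coe_image, Finset.coe_univ, Set.image_univ]
      exact (Fin.rev_surjective.range_comp _).trans (S.range_orderEmbOfFin hS)
  · intro f hf
    rw [Finset.sort_image_of_strictAnti (Finset.mem_filter.mp hf).2]

namespace RKst

variable {N : ℕ}

def gen (a : Fin N) : RingQuot (RKRel N) := pr N (FreeAlgebra.ι ℤ a)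

theorem pr_word (l : List (Fin N)) : pr N (word N l) = (l.map gen).prod := by
  simp only [word, map_list_prod, List.map_map]
  rfl

theorem pr_word_eq_zero {l : List (Fin N)} (hl : ¬ l.Nodup) : pr N (word N l) = 0 := by
  simpa [pr] using RingQuot.mkAlgHom_rel ℤ (RKRel.repeated l hl)

theorem gen_mul_self (c : Fin N) : gen c * gen c = 0 := by
  simpa [pr_word] using pr_word_eq_zero (l := [c, c]) (by simp)

theorem gen_mul_gen_mul_self (a c : Fin N) : gen c * gen a * gen c = 0 := by
  simpa [pr_word, mul_assoc] using pr_word_eq_zero (l := [c, a, c]) (by simp)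

theorem gen_mul_lie_self (a c : Fin N) : gen c * ⁅gen a, gen c⁆ = 0 := by
  rw [Ring.lie_def, mul_sub, ← mul_assoc, ← mul_assoc, gen_mul_gen_mul_self, gen_mul_self,
    zero_mul, sub_zero]

theorem lie_mul_gen_self (a c : Fin N) : ⁅gen a, gen c⁆ * gen a = 0 := by
  rw [Ring.lie_def, sub_mul, gen_mul_gen_mul_self, mul_assoc, gen_mul_self, mul_zero, sub_zero]

theorem commute_gen_lie {a b c : Fin N} (hab : a < b) (hbc : b < c) :
    Commute (gen b) ⁅gen a, gen c⁆ := by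
  have h := RingQuot.mkAlgHom_rel ℤ (RKRel.knuth_rotation a b c hab hbc)
  simpa [Commute, SemiconjBy, Ring.lie_def, gen, pr, sub_eq_zero] using h

def descWord (S : Finset (Fin N)) : RingQuot (RKRel N) := pr N (word N (S.sort (· ≥ ·)))

theorem descWord_empty : descWord (∅ : Finset (Fin N)) = 1 := by
  simp [descWord, word]

theorem descWord_insert {c : Fin N} {S : Finset (Fin N)} (hS : ∀ a ∈ S, a < c) :
    descWord (insert c S) = gen c * descWord S := by
  rw [descWord, Finset.sort_insert _ (fun a ha => (hS a ha).le) (fun hc => lt_irrefl c (hS c hc)),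
    pr_word, descWord, pr_word, List.map_cons, List.prod_cons]

/-- The degree ranges over `ℤ`, with `e_d = 0` for `d < 0`, so that `e_{d-1}` needs no case
split. -/
def esymOn (I : Finset (Fin N)) (d : ℤ) : RingQuot (RKRel N) :=
  ∑ S ∈ I.powerset, if (S.card : ℤ) = d then descWord S else 0

theorem esymOn_empty (d : ℤ) : esymOn (∅ : Finset (Fin N)) d = if 0 = d then 1 else 0 := by
  simp [esymOn, descWord_empty]

theorem esymOn_insert {c : Fin N} {I : Finset (Fin N)} (hI : ∀ a ∈ I, a < c) (d : ℤ) :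
    esymOn (insert c I) d = esymOn I d + gen c * esymOn I (d - 1) := by
  rw [esymOn, Finset.sum_powerset_insert (fun hc => lt_irrefl c (hI c hc)), esymOn, esymOn,
    Finset.mul_sum]
  congr 1
  refine Finset.sum_congr rfl fun T hT => ?_
  have hT : ∀ a ∈ T, a < c := fun a ha => hI a (Finset.mem_powerset.mp hT ha)
  rw [Finset.card_insert_of_notMem (fun hc => lt_irrefl c (hT c hc)), descWord_insert hT,
    mul_ite, mul_zero, Nat.cast_succ]
  exact if_congr eq_sub_iff_add_eq.symm rfl rfl

theorem esymOn_mul_gen {c : Fin N} {I : Finset (Fin N)} (hI : ∀ a ∈ I, a < c) (d : ℤ) :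
    esymOn I d * gen c = gen c * esymOn I d + (∑ a ∈ I, ⁅gen a, gen c⁆) * esymOn I (d - 1) := by
  induction I using Finset.induction_on_max generalizing d with
  | empty => rw [esymOn_empty]; split_ifs <;> simp
  | insert b I hb ih =>
    have hbc : b < c := hI b (Finset.mem_insert_self b I)
    have ih := ih fun a ha => hI a (Finset.mem_insert_of_mem ha)
    set Z := ∑ a ∈ I, ⁅gen a, gen c⁆
    have hbZ : gen b * Z = Z * gen b :=
      (Commute.sum_right _ _ _ fun a ha => commute_gen_lie (hb a ha) hbc).eq
    have hbc_swap : gen b * gen c = gen c * gen b + ⁅gen b, gen c⁆ := by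
      rw [Ring.lie_def, add_sub_cancel]
    rw [esymOn_insert hb, esymOn_insert hb,
      Finset.sum_insert (fun hbI => lt_irrefl b (hb b hbI))]
    calc (esymOn I d + gen b * esymOn I (d - 1)) * gen c
        = esymOn I d * gen c + gen b * (esymOn I (d - 1) * gen c) := by noncomm_ring
      _ = gen c * esymOn I d + Z * esymOn I (d - 1) + gen b * gen c * esymOn I (d - 1)
            + gen b * Z * esymOn I (d - 1 - 1) := by rw [ih, ih]; noncomm_ring
      _ = gen c * (esymOn I d + gen b * esymOn I (d - 1))
            + (⁅gen b, gen c⁆ + Z) * (esymOn I (d - 1) + gen b * esymOn I (d - 1 - 1))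
            - ⁅gen b, gen c⁆ * gen b * esymOn I (d - 1 - 1) := by
          rw [hbc_swap, hbZ]; noncomm_ring
      _ = _ := by rw [lie_mul_gen_self, zero_mul, sub_zero]

theorem esymOn_commute (I : Finset (Fin N)) (i j : ℤ) : Commute (esymOn I i) (esymOn I j) := by
  induction I using Finset.induction_on_max generalizing i j with
  | empty => rw [esymOn_empty, esymOn_empty]; split_ifs <;> simp
  | insert c I hc ih =>
    refine commute_of_eq_add_mul_pred (gen_mul_self c) ?_ (esymOn_mul_gen hc) (esymOn_insert hc)
      ih i j
    rw [Finset.mul_sum]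
    exact Finset.sum_eq_zero fun a _ => gen_mul_lie_self a c

theorem pr_esym (d : ℕ) : pr N (esym N d) = esymOn Finset.univ d := by
  rw [esym_eq_sum_powersetCard, map_sum, esymOn, Finset.powersetCard_eq_filter, Finset.sum_filter]
  refine Finset.sum_congr rfl fun S _ => ?_
  simp only [Nat.cast_inj, descWord]

end RKst

/-- In the quotient `U/I_RKst`, the noncommutative elementary symmetric functions
`e_i(u)` and `e_j(u)` commute for all `i, j`. -/
theorem esym_commute_in_quotient (N i j : ℕ) :
    pr N (esym N i * esym N j) = pr N (esym N j * esym N i) := by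
  rw [map_mul, map_mul, RKst.pr_esym, RKst.pr_esym]
  exact (RKst.esymOn_commute Finset.univ i j).eq

end
end

section
/- If θ : [N] → Z is an order-preserving injection and θ_U : U → U is the algebra homomorphism sending u_i to u_{θ(i)} (with u_j := 0 for j ∉ [N]), then θ_U(I_RKst) ⊆ I_RKst, so θ_U induces an algebra homomorphism U/I_RKst → U/I_RKst. -/
/-! The substitution `θ_U` sends `u_i` to `u_{g i}` for a map `g` that is strictly monotone on the
letters `θ_U` does not kill. Each generator of `I_RKst` therefore goes either to `0` (when it
contains a killed letter) or to a generator of the same kind: the Knuth relation for `a < b < c`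
to the one for `g a < g b < g c`, a word with a repeated letter to a word with a repeated letter.
So `θ_U` preserves the ring congruence these generate, and descends to the quotient. -/

open scoped Classical

noncomputable section

/-- The two-sided ideal `I_RKst`, realized as the congruence class of `0` under the ring
congruence generated by the relations `RKRel N`. -/
def IRKst (N : ℕ) : Set (FreeAlgebra ℤ (Fin N)) :=
  {z | ringConGen (RKRel N) z 0}

/-- The algebra endomorphism `θ_U : U → U` induced by a map `θ : [N] → ℤ` on letters,
sending `u_i ↦ u_{θ(i)}`, where `u_j := 0` for `j ∉ [N]`.  Here the variable indexed by
`i : Fin N` is the letter `i+1 ∈ [N] = {1, …, N}`. -/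
def thetaU (N : ℕ) (θ : Fin N → ℤ) : FreeAlgebra ℤ (Fin N) →ₐ[ℤ] FreeAlgebra ℤ (Fin N) :=
  FreeAlgebra.lift ℤ (fun i =>
    if h : 1 ≤ θ i ∧ θ i ≤ (N : ℤ) then
      FreeAlgebra.ι ℤ (⟨(θ i - 1).toNat, by omega⟩ : Fin N)
    else 0)

theorem RingQuot.mkAlgHom_eq_of_ringConGen {R A : Type*} [CommSemiring R] [Semiring A]
    [Algebra R A] {r : A → A → Prop} {x y : A} (h : ringConGen r x y) :
    RingQuot.mkAlgHom R r x = RingQuot.mkAlgHom R r y :=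
  RingCon.ringConGen_le (c := RingCon.ker (RingQuot.mkAlgHom R r : A →+* RingQuot r)).2
    (fun _ _ hr => RingQuot.mkAlgHom_rel R hr) h

theorem ringConGen_map_of_rel {R S F : Type*} [NonUnitalNonAssocSemiring R]
    [NonUnitalNonAssocSemiring S] [FunLike F R S] [NonUnitalRingHomClass F R S] (f : F)
    {r : R → R → Prop} {s : S → S → Prop} (h : ∀ x y, r x y → ringConGen s (f x) (f y))
    {x y : R} (hxy : ringConGen r x y) : ringConGen s (f x) (f y) :=
  RingCon.ringConGen_le (c := (ringConGen s).comap f).2 h hxy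

theorem map_word {N : ℕ} {A : Type*} [Semiring A] [Algebra ℤ A]
    (F : FreeAlgebra ℤ (Fin N) →ₐ[ℤ] A) (l : List (Fin N)) :
    F (word N l) = (l.map fun i => F (FreeAlgebra.ι ℤ i)).prod := by
  rw [word, map_list_prod, List.map_map]; rfl

theorem RKRel.ringConGen_map_of_strictMonoOn {N M : ℕ}
    (F : FreeAlgebra ℤ (Fin N) →ₐ[ℤ] FreeAlgebra ℤ (Fin M)) (S : Set (Fin N))
    (g : Fin N → Fin M) (hg : StrictMonoOn g S)
    (hF : ∀ i, F (FreeAlgebra.ι ℤ i) = if i ∈ S then FreeAlgebra.ι ℤ (g i) else 0)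
    {x y : FreeAlgebra ℤ (Fin N)} (h : RKRel N x y) : ringConGen (RKRel M) (F x) (F y) := by
  cases h with
  | knuth_rotation a b c hab hbc =>
    simp only [map_sub, map_mul, map_zero]
    by_cases hS : a ∈ S ∧ b ∈ S ∧ c ∈ S
    · obtain ⟨ha, hb, hc⟩ := hS
      simp only [hF, if_pos ha, if_pos hb, if_pos hc]
      exact RingCon.le_ringConGen _ _ (.knuth_rotation _ _ _ (hg ha hb hab) (hg hb hc hbc))
    · have hzero : F (FreeAlgebra.ι ℤ a) = 0 ∨ F (FreeAlgebra.ι ℤ b) = 0 ∨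
          F (FreeAlgebra.ι ℤ c) = 0 := by
        simp only [hF, ite_eq_right_iff, FreeAlgebra.ι_ne_zero]
        tauto
      rcases hzero with h | h | h <;> simpa [h] using (ringConGen _).refl 0
  | repeated l hl =>
    rw [map_word, map_zero]
    by_cases hS : ∀ i ∈ l, i ∈ S
    · have : (l.map fun i => F (FreeAlgebra.ι ℤ i)) = (l.map g).map (FreeAlgebra.ι ℤ) := by
        rw [List.map_map]
        exact List.map_congr_left fun i hi => by simp [hF, hS i hi]
      rw [this]
      exact RingCon.le_ringConGen _ _ (.repeated _ fun hn => hl hn.of_map)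
    · obtain ⟨i, hi, hiS⟩ := not_forall₂.1 hS
      rw [List.prod_eq_zero (List.mem_map.2 ⟨i, hi, by simp [hF, hiS]⟩)]
      exact (ringConGen _).refl 0

theorem thetaU_ι_eq_ite_of_strictMono {N : ℕ} {θ : Fin N → ℤ} (hθ : StrictMono θ) :
    ∃ (S : Set (Fin N)) (g : Fin N → Fin N), StrictMonoOn g S ∧
      ∀ i, thetaU N θ (FreeAlgebra.ι ℤ i) = if i ∈ S then FreeAlgebra.ι ℤ (g i) else 0 := by
  refine ⟨{i | 1 ≤ θ i ∧ θ i ≤ N},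
    fun i => if h : 1 ≤ θ i ∧ θ i ≤ N then ⟨(θ i - 1).toNat, by omega⟩ else i, ?_, ?_⟩
  · intro a (ha : 1 ≤ θ a ∧ θ a ≤ N) b (hb : 1 ≤ θ b ∧ θ b ≤ N) hab
    have := hθ hab
    simp only [dif_pos ha, dif_pos hb, Fin.mk_lt_mk]
    omega
  · intro i
    by_cases hi : 1 ≤ θ i ∧ θ i ≤ N <;> simp [thetaU, hi]

/-- If `θ : [N] → ℤ` is an order-preserving injection (equivalently, strictly monotone),
then `θ_U(I_RKst) ⊆ I_RKst`, and hence `θ_U` induces an algebra homomorphism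
`U/I_RKst → U/I_RKst`. -/
theorem thetaU_preserves_IRKst_of_strictMono (N : ℕ) (θ : Fin N → ℤ) (hθ : StrictMono θ) :
    (∀ z ∈ IRKst N, thetaU N θ z ∈ IRKst N) ∧
      ∃ φ : RingQuot (RKRel N) →ₐ[ℤ] RingQuot (RKRel N),
        ∀ z, φ (RingQuot.mkAlgHom ℤ (RKRel N) z) =
          RingQuot.mkAlgHom ℤ (RKRel N) (thetaU N θ z) := by
  obtain ⟨S, g, hg, hι⟩ := thetaU_ι_eq_ite_of_strictMono hθ
  have hrel : ∀ x y, RKRel N x y → ringConGen (RKRel N) (thetaU N θ x) (thetaU N θ y) :=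
    fun _ _ => RKRel.ringConGen_map_of_strictMonoOn _ S g hg hι
  refine ⟨fun z hz => ?_, ⟨RingQuot.liftAlgHom ℤ ⟨(RingQuot.mkAlgHom ℤ _).comp (thetaU N θ),
    fun x y h => RingQuot.mkAlgHom_eq_of_ringConGen (hrel x y h)⟩,
    RingQuot.liftAlgHom_mkAlgHom_apply ℤ _ _⟩⟩
  simpa [IRKst] using ringConGen_map_of_rel (thetaU N θ) hrel hz

end
end

section
/- If θ : [N] → Z is an order-reversing injection and θ_U : U → U is the algebra homomorphism sending u_i to u_{θ(i)} (with u_j := 0 for j ∉ [N]), then θ_U(I_RKst) ⊆ I_RKst. -/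
open scoped Classical

noncomputable section

/-! The Knuth generator is the double commutator `⁅u_b, ⁅u_a, u_c⁆⁆`. Under `θ_U` each letter goes
to a letter or to `0`. If some letter of the generator goes to `0`, so does the generator; otherwise,
as `θ` reverses order, its image is `⁅u_b', ⁅u_c', u_a'⁆⁆ = -⁅u_b', ⁅u_a', u_c'⁆⁆` with
`c' < b' < a'`, minus a Knuth generator. The image of a word with a repeated letter is `0` or again a
word with a repeated letter. So `θ_U` maps the generating relations into the ring congruence they
generate, hence maps the whole congruence into it. -/

attribute [local instance] LieRing.ofAssociativeRing

theorem Ring.map_lie {A B F : Type*} [Ring A] [Ring B] [FunLike F A B] [RingHomClass F A B]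
    (f : F) (x y : A) : f ⁅x, y⁆ = ⁅f x, f y⁆ := by
  simp only [Ring.lie_def, map_sub, map_mul]

section IRKst

variable {N : ℕ}

theorem mem_IRKst {z : FreeAlgebra ℤ (Fin N)} : z ∈ IRKst N ↔ ringConGen (RKRel N) z 0 :=
  Iff.rfl

theorem zero_mem_IRKst : (0 : FreeAlgebra ℤ (Fin N)) ∈ IRKst N :=
  (ringConGen (RKRel N)).refl 0

theorem neg_mem_IRKst {z : FreeAlgebra ℤ (Fin N)} (hz : z ∈ IRKst N) : -z ∈ IRKst N := by
  simpa [mem_IRKst] using (ringConGen (RKRel N)).neg hz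

theorem mem_IRKst_of_RKRel {z : FreeAlgebra ℤ (Fin N)} (hz : RKRel N z 0) : z ∈ IRKst N :=
  RingConGen.Rel.of _ _ hz

theorem lie_lie_mem_IRKst {a b c : Fin N} (hab : a < b) (hbc : b < c) :
    ⁅FreeAlgebra.ι ℤ b, ⁅FreeAlgebra.ι ℤ a, FreeAlgebra.ι ℤ c⁆⁆ ∈ IRKst N :=
  mem_IRKst_of_RKRel (.knuth_rotation a b c hab hbc)

end IRKst

section thetaU

variable {N : ℕ} {θ : Fin N → ℤ}

variable (N θ) in
/-- The index of `u_{θ(i)}`; outside the range `[N]` the value `i` is a placeholder, as `θ_U`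
sends those letters to `0`. -/
def thetaLetter (i : Fin N) : Fin N :=
  if h : 1 ≤ θ i ∧ θ i ≤ (N : ℤ) then ⟨(θ i - 1).toNat, by omega⟩ else i

theorem thetaU_ι (i : Fin N) :
    thetaU N θ (FreeAlgebra.ι ℤ i) =
      if 1 ≤ θ i ∧ θ i ≤ (N : ℤ) then FreeAlgebra.ι ℤ (thetaLetter N θ i) else 0 := by
  by_cases hi : 1 ≤ θ i ∧ θ i ≤ (N : ℤ) <;> simp [thetaU, thetaLetter, hi]

theorem thetaLetter_lt_thetaLetter (hθ : StrictAnti θ) {i j : Fin N}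
    (hi : 1 ≤ θ i ∧ θ i ≤ (N : ℤ)) (hj : 1 ≤ θ j ∧ θ j ≤ (N : ℤ)) (hij : i < j) :
    thetaLetter N θ j < thetaLetter N θ i := by
  have := hθ hij
  simp only [thetaLetter, dif_pos hi, dif_pos hj, Fin.mk_lt_mk]
  omega

theorem thetaU_word (l : List (Fin N)) :
    thetaU N θ (word N l) =
      if ∀ i ∈ l, 1 ≤ θ i ∧ θ i ≤ (N : ℤ) then word N (l.map (thetaLetter N θ)) else 0 := by
  rw [word, map_list_prod, List.map_map]
  split_ifs with hl
  · rw [word, List.map_map]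
    exact congrArg _ (List.map_congr_left fun i hi => (thetaU_ι i).trans (if_pos (hl i hi)))
  · obtain ⟨i, hi, hout⟩ := not_forall₂.1 hl
    exact List.prod_eq_zero (List.mem_map.2 ⟨i, hi, (thetaU_ι i).trans (if_neg hout)⟩)

theorem thetaU_word_mem_IRKst {l : List (Fin N)} (hl : ¬l.Nodup) :
    thetaU N θ (word N l) ∈ IRKst N := by
  rw [thetaU_word]
  split_ifs
  · exact mem_IRKst_of_RKRel (.repeated _ (mt (List.Nodup.of_map _) hl))
  · exact zero_mem_IRKst

theorem thetaU_lie_lie_mem_IRKst (hθ : StrictAnti θ) {a b c : Fin N} (hab : a < b)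
    (hbc : b < c) :
    thetaU N θ ⁅FreeAlgebra.ι ℤ b, ⁅FreeAlgebra.ι ℤ a, FreeAlgebra.ι ℤ c⁆⁆ ∈ IRKst N := by
  simp only [Ring.map_lie, thetaU_ι]
  split_ifs with hb ha hc
  · rw [← lie_skew (FreeAlgebra.ι ℤ (thetaLetter N θ a)), lie_neg]
    exact neg_mem_IRKst (lie_lie_mem_IRKst (thetaLetter_lt_thetaLetter hθ hb hc hbc)
      (thetaLetter_lt_thetaLetter hθ ha hb hab))
  all_goals simpa using zero_mem_IRKst

end thetaU

/-- If `θ : [N] → ℤ` is an order-reversing injection (equivalently, strictly antitone),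
then `θ_U(I_RKst) ⊆ I_RKst`. -/
theorem thetaU_preserves_IRKst_of_strictAnti (N : ℕ) (θ : Fin N → ℤ) (hθ : StrictAnti θ) :
    ∀ z ∈ IRKst N, thetaU N θ z ∈ IRKst N := by
  have hgen : RKRel N ≤ (ringConGen (RKRel N)).comap (thetaU N θ) := by
    rintro x y (⟨a, b, c, hab, hbc⟩ | ⟨l, hl⟩)
    all_goals rw [RingCon.comap_rel, map_zero]
    · exact thetaU_lie_lie_mem_IRKst hθ hab hbc
    · exact thetaU_word_mem_IRKst hl
  intro z hz
  simpa [mem_IRKst] using RingCon.ringConGen_le.2 hgen hz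

end
end

section
/- For a hook shape λ = (a, 1^b) with a ≥ 1, b ≥ 0, and any flag n = (n_1 ≤ n_2 ≤ ... ≤ n_l) with l = b+1, the noncommutative column flagged Schur function J_λ^n is congruent modulo I_RKst to the sum of column reading words of all semistandard Young tableaux of shape λ' with distinct entries whose column-c entries lie in [n_c]. In particular 𝔍_{(a,1^b)'}(u) is a positive sum of monomials in U/I_RKst. -/
/-!
In the Jacobi–Trudi matrix `(e_{α_k + j - k}([n_k]))` of a hook `(a, 1^b)` the first column is
`(e_a([n_1]), 1, 0, …, 0)`, so expanding along it (the entry `1` commutes with everything) gives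
`J_{(a,1^{b+1})}^n = e_a([n_1]) J_{(1^{b+1})}^{(n_2,…)} - J_{(a+1,1^b)}^{(n_1,n_3,…)}`.
By induction on `b` both `J`s on the right are sums of reading words of flagged hook tableaux, and
it remains to split the product. A word of `e_a([n_1])` times the reading word of the one-row
tableau `x < v_1 < ⋯ < v_b` is `u x v` with `u` decreasing; if it has no repeated letter it is
the reading word of exactly one hook: the one with column `u` and row `x v` when `min u < x`, and
the one with column `u x` and row `v` when `x < min u`. So only the relations killing words with a
repeated letter are needed.
-/

open scoped Classical

noncomputable section

/-- The flagged noncommutative elementary symmetric function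
`e_d([m]) = ∑_{m ≥ i_1 > ⋯ > i_d ≥ 1} u_{i_1} ⋯ u_{i_d}` (letters `1, …, m` correspond to
indices `0, …, m-1` of `Fin N`). -/
def esymFlag (N m d : ℕ) : FreeAlgebra ℤ (Fin N) :=
  ∑ f : Fin d → Fin N,
    if StrictAnti f ∧ ∀ i, (f i : ℕ) < m then word N (List.ofFn f) else 0

/-- `e_d([m])` with integer index: `e_d([m]) = 0` for `d < 0`. -/
def esymFlagZ (N m : ℕ) (d : ℤ) : FreeAlgebra ℤ (Fin N) :=
  if 0 ≤ d then esymFlag N m d.toNat else 0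

/-- The noncommutative column flagged Schur function
`J_α^n = ∑_{π ∈ S_l} sgn(π) e_{α_1+π(1)-1}([n_1]) ⋯ e_{α_l+π(l)-l}([n_l])`. -/
def Jflag (N l : ℕ) (α : Fin l → ℤ) (n : Fin l → ℕ) : FreeAlgebra ℤ (Fin N) :=
  ∑ σ : Equiv.Perm (Fin l), ((Equiv.Perm.sign σ : ℤˣ) : ℤ) •
    (List.ofFn fun k : Fin l =>
      esymFlagZ N (n k) (α k + ((σ k : ℕ) : ℤ) - ((k : ℕ) : ℤ))).prod

/-- The hook shape `λ = (a, 1^b)`, as a composition with `b+1` parts. -/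
def hookComp (a b : ℕ) : Fin (b + 1) → ℤ := fun k => if (k : ℕ) = 0 then (a : ℤ) else 1

open Equiv Equiv.Perm

section RowDet

variable {R : Type*} [Ring R]

def rowDet {l : ℕ} (M : Fin l → Fin l → R) : R :=
  ∑ σ : Perm (Fin l), (sign σ : ℤ) • (List.ofFn fun k => M k (σ k)).prod

theorem rowDet_one (M : Fin 1 → Fin 1 → R) : rowDet M = M 0 0 := by
  simp [rowDet]

-- Reindexes permutations by the row `p` that they send to column `0`.
def decomposeFinInv {l : ℕ} : Fin (l + 1) × Perm (Fin l) ≃ Perm (Fin (l + 1)) :=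
  ((Equiv.refl _).prodCongr (Equiv.inv _)).trans (decomposeFin.symm.trans (Equiv.inv _))

variable {l : ℕ}

theorem decomposeFinInv_apply_self (p : Fin (l + 1)) (e : Perm (Fin l)) :
    decomposeFinInv (p, e) p = 0 := by
  simp [decomposeFinInv, Equiv.symm_apply_eq]

theorem sign_decomposeFinInv (p : Fin (l + 1)) (e : Perm (Fin l)) :
    sign (decomposeFinInv (p, e)) = (if p = 0 then 1 else -1) * sign e := by
  simp [decomposeFinInv, decomposeFin.symm_sign]

theorem decomposeFinInv_zero_apply_succ (e : Perm (Fin l)) (k : Fin l) :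
    decomposeFinInv (0, e) k.succ = (e k).succ := by
  simp [decomposeFinInv, Equiv.symm_apply_eq, decomposeFin_symm_apply_succ]

theorem decomposeFinInv_one_apply_zero (e : Perm (Fin (l + 1))) :
    decomposeFinInv (1, e) 0 = (e 0).succ := by
  simp [decomposeFinInv, Equiv.symm_apply_eq, decomposeFin_symm_apply_succ]

theorem decomposeFinInv_one_apply_succ_succ (e : Perm (Fin (l + 1))) (k : Fin l) :
    decomposeFinInv (1, e) k.succ.succ = (e k.succ).succ := by
  simp [decomposeFinInv, Equiv.symm_apply_eq, decomposeFin_symm_apply_succ,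
    swap_apply_of_ne_of_ne (Fin.succ_ne_zero _) (Fin.succ_succ_ne_one k)]

theorem rowDet_expand_column_zero (M : Fin (l + 2) → Fin (l + 2) → R)
    (h10 : M 1 0 = 1) (h0 : ∀ k : Fin l, M k.succ.succ 0 = 0) :
    rowDet M = M 0 0 * rowDet (fun i j => M i.succ j.succ) -
      rowDet (fun i j => M ((1 : Fin (l + 2)).succAbove i) j.succ) := by
  have hvanish : ∀ (k : Fin l) (e : Perm (Fin (l + 1))),
      (List.ofFn fun i => M i (decomposeFinInv (k.succ.succ, e) i)).prod = 0 := fun k e =>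
    List.prod_eq_zero (List.mem_ofFn.2 ⟨k.succ.succ, by rw [decomposeFinInv_apply_self, h0]⟩)
  rw [rowDet, ← decomposeFinInv.sum_comp, Fintype.sum_prod_type, Fin.sum_univ_succ,
    Fin.sum_univ_succ]
  simp only [hvanish, smul_zero, Finset.sum_const_zero, add_zero, sign_decomposeFinInv,
    Fin.succ_zero_eq_one, if_pos, one_ne_zero, if_false, rowDet, Finset.mul_sum, sub_eq_add_neg,
    ← Finset.sum_neg_distrib]
  congr 1
  · refine Finset.sum_congr rfl fun e _ => ?_
    simp only [List.ofFn_succ, List.prod_cons, decomposeFinInv_apply_self,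
      decomposeFinInv_zero_apply_succ, one_mul, mul_smul_comm]
  · refine Finset.sum_congr rfl fun e _ => ?_
    simp [List.ofFn_succ, decomposeFinInv_one_apply_zero, decomposeFinInv_one_apply_succ_succ,
      decomposeFinInv_apply_self, h10]

end RowDet

section Jflag

variable {N : ℕ}

@[simp] theorem hookComp_zero (a b : ℕ) : hookComp a b 0 = a := rfl

@[simp] theorem hookComp_succ (a b : ℕ) (k : Fin b) : hookComp a b k.succ = 1 := rfl

@[simp] theorem hookComp_one (b : ℕ) (k : Fin (b + 1)) : hookComp 1 b k = 1 := by
  cases k using Fin.cases <;> rfl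

theorem esymFlag_zero (m : ℕ) : esymFlag N m 0 = 1 := by
  simp [esymFlag, word, Subsingleton.strictAnti]

theorem esymFlagZ_natCast (m d : ℕ) : esymFlagZ N m d = esymFlag N m d := by
  simp [esymFlagZ]

theorem esymFlagZ_of_neg {m : ℕ} {d : ℤ} (hd : d < 0) : esymFlagZ N m d = 0 := by
  simp [esymFlagZ, hd]

theorem Jflag_eq_rowDet (l : ℕ) (α : Fin l → ℤ) (n : Fin l → ℕ) :
    Jflag N l α n = rowDet fun k j => esymFlagZ N (n k) (α k + ((j : ℕ) : ℤ) - ((k : ℕ) : ℤ)) :=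
  rfl

theorem Jflag_hookComp_zero (a : ℕ) (n : Fin 1 → ℕ) :
    Jflag N 1 (hookComp a 0) n = esymFlag N (n 0) a := by
  simp [Jflag_eq_rowDet, rowDet_one, esymFlagZ_natCast]

theorem Jflag_hookComp_succ (a b : ℕ) (n : Fin (b + 2) → ℕ) :
    Jflag N (b + 2) (hookComp a (b + 1)) n =
      esymFlag N (n 0) a * Jflag N (b + 1) (hookComp 1 b) (n ∘ Fin.succ) -
        Jflag N (b + 1) (hookComp (a + 1) b) (n ∘ (1 : Fin (b + 2)).succAbove) := by
  rw [Jflag_eq_rowDet, rowDet_expand_column_zero _ ?one ?zero, Jflag_eq_rowDet, Jflag_eq_rowDet]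
  case one => simp [esymFlag_zero, ← Fin.succ_zero_eq_one, -Fin.succ_zero_eq_one', esymFlagZ]
  case zero =>
    intro k
    apply esymFlagZ_of_neg
    simp only [hookComp_succ, Fin.val_succ, Fin.val_zero]
    push_cast
    omega
  congr 1
  · congr 2
    funext i j
    simp only [Function.comp_apply, hookComp_succ, hookComp_one, Fin.val_succ]
    congr 1
    push_cast
    ring
  · congr 1
    funext i j
    cases i using Fin.cases <;> simp only [Function.comp_apply, Fin.one_succAbove_zero,
      Fin.one_succAbove_succ, hookComp_zero, hookComp_succ, Fin.val_succ, Fin.val_zero] <;>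
      congr 1 <;> push_cast <;> ring

end Jflag

theorem List.ofFn_comp_rev {α : Type*} {n : ℕ} (f : Fin n → α) :
    List.ofFn (fun i => f i.rev) = (List.ofFn f).reverse := by
  simp [List.ofFn_eq_map, ← List.map_reverse, List.finRange_reverse]

section WordSum

variable {N : ℕ} {ι κ : Type*} [Fintype ι] [Fintype κ]

theorem word_append (l₁ l₂ : List (Fin N)) : word N (l₁ ++ l₂) = word N l₁ * word N l₂ := by
  simp [word]

theorem pr_word_of_not_nodup {l : List (Fin N)} (h : ¬ l.Nodup) : pr N (word N l) = 0 := by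
  simpa [pr] using RingQuot.mkAlgHom_rel ℤ (RKRel.repeated l h)

def wordSum (C : ι → Prop) (L : ι → List (Fin N)) : FreeAlgebra ℤ (Fin N) :=
  ∑ i, if C i then word N (L i) else 0

theorem sum_ite_word_eq_wordSum (C : ι → Prop) [DecidablePred C] (L : ι → List (Fin N)) :
    ∑ i, (if C i then word N (L i) else 0) = wordSum C L := by
  simp only [wordSum]
  congr!

theorem wordSum_equiv (e : ι ≃ κ) {C : ι → Prop} {D : κ → Prop} {L : ι → List (Fin N)}
    {M : κ → List (Fin N)} (hC : ∀ i, C i ↔ D (e i)) (hL : ∀ i, L i = M (e i)) :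
    wordSum C L = wordSum D M :=
  Fintype.sum_equiv e _ _ fun i => by simp only [hC, hL]

theorem wordSum_mul_wordSum (C : ι → Prop) (D : κ → Prop) (L : ι → List (Fin N))
    (M : κ → List (Fin N)) :
    wordSum C L * wordSum D M =
      wordSum (fun x : ι × κ => C x.1 ∧ D x.2) fun x => L x.1 ++ M x.2 := by
  simp only [wordSum, Finset.sum_mul_sum, ← Fintype.sum_prod_type', ite_zero_mul_ite_zero,
    word_append]

theorem wordSum_add_wordSum (C : ι → Prop) (D : κ → Prop) (L : ι → List (Fin N))
    (M : κ → List (Fin N)) :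
    wordSum C L + wordSum D M = wordSum (Sum.elim C D) (Sum.elim L M) := by
  rw [wordSum, wordSum, wordSum, Fintype.sum_sum_type]
  rfl

theorem exists_multiset_wordSum (C : ι → Prop) (L : ι → List (Fin N)) :
    ∃ m : Multiset (List (Fin N)), wordSum C L = (m.map (word N)).sum :=
  ⟨(Finset.univ.filter C).val.map L, by
    rw [Multiset.map_map, wordSum, ← Finset.sum_filter, Finset.sum_eq_multiset_sum]; rfl⟩

theorem pr_wordSum_eq_sum_nodup (C : ι → Prop) (L : ι → List (Fin N)) :
    pr N (wordSum C L) =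
      ∑ i ∈ Finset.univ.filter fun i => C i ∧ (L i).Nodup, pr N (word N (L i)) := by
  rw [wordSum, map_sum, Finset.sum_filter]
  refine Finset.sum_congr rfl fun i _ => ?_
  by_cases hC : C i <;> by_cases hL : (L i).Nodup <;> simp [hC, hL, pr_word_of_not_nodup]

theorem pr_wordSum_eq_of_bij {C : ι → Prop} {D : κ → Prop} {L : ι → List (Fin N)}
    {M : κ → List (Fin N)} (Φ : ι → κ) (Ψ : κ → ι)
    (hΦ : ∀ i, C i → (L i).Nodup → D (Φ i) ∧ M (Φ i) = L i)
    (hΨ : ∀ k, D k → (M k).Nodup → C (Ψ k) ∧ L (Ψ k) = M k)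
    (hΨΦ : ∀ i, C i → Ψ (Φ i) = i) (hΦΨ : ∀ k, D k → Φ (Ψ k) = k) :
    pr N (wordSum C L) = pr N (wordSum D M) := by
  rw [pr_wordSum_eq_sum_nodup, pr_wordSum_eq_sum_nodup]
  refine Finset.sum_nbij' Φ Ψ ?_ ?_ (fun i hi => hΨΦ i (Finset.mem_filter.1 hi).2.1)
    (fun k hk => hΦΨ k (Finset.mem_filter.1 hk).2.1) ?_ <;>
    simp only [Finset.mem_filter, Finset.mem_univ, true_and]
  · exact fun i ⟨hC, hL⟩ => ⟨(hΦ i hC hL).1, (hΦ i hC hL).2 ▸ hL⟩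
  · exact fun k ⟨hD, hM⟩ => ⟨(hΨ k hD hM).1, (hΨ k hD hM).2 ▸ hM⟩
  · exact fun i ⟨hC, hL⟩ => by rw [(hΦ i hC hL).2]

theorem pr_wordSum_congr {C D : ι → Prop} {L : ι → List (Fin N)}
    (h : ∀ i, (L i).Nodup → (C i ↔ D i)) : pr N (wordSum C L) = pr N (wordSum D L) :=
  pr_wordSum_eq_of_bij id id (fun i hC hL => ⟨(h i hL).1 hC, rfl⟩)
    (fun i hD hL => ⟨(h i hL).2 hD, rfl⟩) (fun _ _ => rfl) (fun _ _ => rfl)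

theorem esymFlag_eq_wordSum (m d : ℕ) :
    esymFlag N m d =
      wordSum (fun c : Fin d → Fin N => StrictMono c ∧ ∀ i, (c i : ℕ) < m)
        fun c => (List.ofFn c).reverse := by
  rw [esymFlag, sum_ite_word_eq_wordSum]
  refine wordSum_equiv (Fin.revPerm.arrowCongr (Equiv.refl _)) (fun f => ?_) fun f => ?_
  · change _ ↔ StrictMono (f ∘ Fin.rev) ∧ ∀ i : Fin d, (f i.rev : ℕ) < m
    refine and_congr ⟨fun hf => hf.comp Fin.rev_strictAnti, fun hf => ?_⟩ Fin.rev_surjective.forall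
    simpa [Function.comp_def] using hf.comp_strictAnti Fin.rev_strictAnti
  · change _ = (List.ofFn fun i => f i.rev).reverse
    rw [List.ofFn_comp_rev, List.reverse_reverse]

end WordSum

section Hook

variable {N : ℕ}

/-- A hook tableau of shape `(b + 1, 1^a)`: `p.1` is its first column read top to bottom and `p.2`
the rest of its first row. Distinct entries are not required, since words with a repeated letter
vanish modulo `I_RKst`. -/
structure IsFlaggedHook (a b : ℕ) (n : Fin (b + 1) → ℕ)
    (p : (Fin (a + 1) → Fin N) × (Fin b → Fin N)) : Prop where
  col_strictMono : StrictMono p.1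
  row_strictMono : StrictMono p.2
  corner_lt : ∀ j, p.1 0 < p.2 j
  col_lt : ∀ i, (p.1 i : ℕ) < n 0
  row_lt : ∀ j, (p.2 j : ℕ) < n j.succ

def creading {a b : ℕ} (p : (Fin a → Fin N) × (Fin b → Fin N)) : List (Fin N) :=
  (List.ofFn p.1).reverse ++ List.ofFn p.2

theorem isFlaggedHook_iff_of_nodup {a b : ℕ} {n : Fin (b + 1) → ℕ}
    {p : (Fin (a + 1) → Fin N) × (Fin b → Fin N)} (hp : (creading p).Nodup) :
    IsFlaggedHook a b n p ↔ StrictMono p.1 ∧ StrictMono p.2 ∧ (∀ i j, p.1 i ≠ p.2 j) ∧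
      (∀ j, p.1 0 < p.2 j) ∧ (∀ i, (p.1 i : ℕ) < n 0) ∧ ∀ j, (p.2 j : ℕ) < n j.succ :=
  ⟨fun h => ⟨h.1, h.2, fun i j => (List.nodup_append.1 hp).2.2 _
    (List.mem_reverse.2 (List.mem_ofFn.2 ⟨i, rfl⟩)) _ (List.mem_ofFn.2 ⟨j, rfl⟩), h.3, h.4,
    h.5⟩, fun ⟨h1, h2, _, h4, h5, h6⟩ => ⟨h1, h2, h4, h5, h6⟩⟩

theorem esymFlag_eq_wordSum_isFlaggedHook (a : ℕ) (n : Fin 1 → ℕ) :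
    esymFlag N (n 0) (a + 1) = wordSum (IsFlaggedHook a 0 n) creading := by
  rw [esymFlag_eq_wordSum]
  refine wordSum_equiv (Equiv.prodUnique _ _).symm (fun c => ?_) fun c => ?_
  · exact ⟨fun ⟨hc, hcn⟩ => ⟨hc, Subsingleton.strictMono _, finZeroElim, hcn, finZeroElim⟩,
      fun h => ⟨h.col_strictMono, h.col_lt⟩⟩
  · simp [creading]

variable {a b : ℕ} {n : Fin (b + 2) → ℕ}

theorem IsFlaggedHook.cons_row {c : Fin (a + 1) → Fin N} {q : (Fin 1 → Fin N) × (Fin b → Fin N)}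
    (hq : IsFlaggedHook 0 b (n ∘ Fin.succ) q) (hc : StrictMono c) (hcn : ∀ i, (c i : ℕ) < n 0)
    (hlt : c 0 < q.1 0) : IsFlaggedHook a (b + 1) n (c, Fin.cons (q.1 0) q.2) where
  col_strictMono := hc
  row_strictMono := Fin.strictMono_cons.2 ⟨hq.corner_lt, hq.row_strictMono⟩
  corner_lt := Fin.forall_fin_succ.2 ⟨hlt, fun j => hlt.trans (hq.corner_lt j)⟩
  col_lt := hcn
  row_lt := Fin.forall_fin_succ.2 ⟨hq.col_lt 0, hq.row_lt⟩

theorem IsFlaggedHook.cons_col {c : Fin (a + 1) → Fin N} {q : (Fin 1 → Fin N) × (Fin b → Fin N)}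
    (hq : IsFlaggedHook 0 b (n ∘ Fin.succ) q) (hc : StrictMono c) (hcn : ∀ i, (c i : ℕ) < n 0)
    (hlt : q.1 0 < c 0) :
    IsFlaggedHook (a + 1) b (n ∘ (1 : Fin (b + 2)).succAbove) (Fin.cons (q.1 0) c, q.2) where
  col_strictMono := Fin.strictMono_cons.2 ⟨fun i => hlt.trans_le (hc.monotone (Fin.zero_le i)), hc⟩
  row_strictMono := hq.row_strictMono
  corner_lt := hq.corner_lt
  col_lt := Fin.forall_fin_succ.2 ⟨Nat.lt_trans hlt (hcn 0), hcn⟩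
  row_lt j := by simpa using hq.row_lt j

theorem IsFlaggedHook.tail_row {p : (Fin (a + 1) → Fin N) × (Fin (b + 1) → Fin N)}
    (h : IsFlaggedHook a (b + 1) n p) :
    IsFlaggedHook 0 b (n ∘ Fin.succ) (fun _ => p.2 0, Fin.tail p.2) where
  col_strictMono := Subsingleton.strictMono (α := Fin 1) _
  row_strictMono := h.row_strictMono.comp (Fin.strictMono_succ)
  corner_lt j := h.row_strictMono (Fin.succ_pos j)
  col_lt _ := h.row_lt 0
  row_lt j := h.row_lt j.succ

theorem IsFlaggedHook.tail_col {p : (Fin (a + 2) → Fin N) × (Fin b → Fin N)}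
    (h : IsFlaggedHook (a + 1) b (n ∘ (1 : Fin (b + 2)).succAbove) p) (h01 : n 0 ≤ n 1) :
    IsFlaggedHook 0 b (n ∘ Fin.succ) (fun _ => p.1 0, p.2) where
  col_strictMono := Subsingleton.strictMono (α := Fin 1) _
  row_strictMono := h.row_strictMono
  corner_lt := h.corner_lt
  col_lt _ := (h.col_lt 0).trans_le h01
  row_lt j := by simpa using h.row_lt j

end Hook

theorem pr_esymFlag_mul_wordSum_isFlaggedHook {N : ℕ} (a b : ℕ) (n : Fin (b + 2) → ℕ)
    (h01 : n 0 ≤ n 1) :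
    pr N (esymFlag N (n 0) (a + 1) * wordSum (IsFlaggedHook 0 b (n ∘ Fin.succ)) creading) =
      pr N (wordSum (IsFlaggedHook a (b + 1) n) creading) +
        pr N (wordSum (IsFlaggedHook (a + 1) b (n ∘ (1 : Fin (b + 2)).succAbove)) creading) := by
  rw [esymFlag_eq_wordSum, wordSum_mul_wordSum, ← map_add, wordSum_add_wordSum]
  refine pr_wordSum_eq_of_bij
    (fun t => if t.1 0 < t.2.1 0 then Sum.inl (t.1, Fin.cons (t.2.1 0) t.2.2)
      else Sum.inr (Fin.cons (t.2.1 0) t.1, t.2.2))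
    (Sum.elim (fun p => (p.1, fun _ => p.2 0, Fin.tail p.2))
      fun p => (Fin.tail p.1, fun _ => p.1 0, p.2)) ?_ ?_ ?_ ?_
  · rintro ⟨c, q⟩ ⟨⟨hc, hcn⟩, hq⟩ hnd
    dsimp only at hcn ⊢
    split_ifs with hlt
    · exact ⟨hq.cons_row hc hcn hlt, by simp [creading]⟩
    · have hne : c 0 ≠ q.1 0 := (List.nodup_append.1 hnd).2.2 _
        (List.mem_reverse.2 (List.mem_ofFn.2 ⟨0, rfl⟩)) _ (by simp [creading])
      exact ⟨hq.cons_col hc hcn (lt_of_le_of_ne (not_lt.1 hlt) hne.symm), by simp [creading]⟩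
  · rintro (p | p) hp -
    · exact ⟨⟨⟨hp.col_strictMono, hp.col_lt⟩, hp.tail_row⟩, by simp [creading, Fin.tail_def]⟩
    · exact ⟨⟨⟨hp.col_strictMono.comp Fin.strictMono_succ, fun i => hp.col_lt i.succ⟩,
        hp.tail_col h01⟩, by simp [creading, Fin.tail_def]⟩
  · rintro ⟨c, q⟩ -
    dsimp only
    split_ifs <;> simp [Prod.ext_iff, funext_iff, Fin.forall_fin_one]
  · rintro (p | p) hp
    · simp [hp.corner_lt 0]
    · simp only [Sum.elim_inr, Fin.tail, not_lt.2 (hp.col_strictMono (Fin.succ_pos 0)).le,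
        if_false, Fin.cons_self_tail]

theorem pr_Jflag_hookComp {N : ℕ} (a b : ℕ) (n : Fin (b + 1) → ℕ) (hn : Monotone n) :
    pr N (Jflag N (b + 1) (hookComp (a + 1) b) n) =
      pr N (wordSum (IsFlaggedHook a b n) creading) := by
  induction b generalizing a with
  | zero => rw [Jflag_hookComp_zero, esymFlag_eq_wordSum_isFlaggedHook]
  | succ b ih =>
    rw [Jflag_hookComp_succ, map_sub, map_mul, ih 0 _ (hn.comp Fin.strictMono_succ.monotone),
      ih (a + 1) _ (hn.comp (Fin.strictMono_succAbove 1).monotone), ← map_mul,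
      pr_esymFlag_mul_wordSum_isFlaggedHook a b n (hn (Fin.zero_le 1)), add_sub_cancel_right]

/-- For the hook shape `λ = (a,1^b)` (`a ≥ 1`) and a flag `n₁ ≤ n₂ ≤ ⋯ ≤ n_{b+1}`,
modulo `I_RKst` the flagged noncommutative Schur function `J_λ^n` equals the sum of the
column reading words `creading(T)` over all semistandard Young tableaux `T` of the
conjugate shape `λ' = (b+1, 1^{a-1})` with no repeated letter whose column-`c` entries lie
in `[n_c]`.  Such a tableau is recorded as a pair `p = (p₁, p₂)` where `p₁` lists the
first column top-to-bottom (strictly increasing, length `a`) and `p₂` lists the rest of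
the first row left-to-right (strictly increasing, length `b`, each entry larger than the
corner `p₁ 0` and disjoint from the first column); `creading(T)` is the first column read
bottom-to-top followed by `p₂`.  In particular (taking all `n_c = N`), `𝔍_{(a,1^b)'}(u)`
is a positive sum of monomials in `U/I_RKst`. -/
theorem Jflag_hook (N a b : ℕ) (ha : 0 < a) (n : Fin (b + 1) → ℕ) (hn : Monotone n) :
    (pr N (Jflag N (b + 1) (hookComp a b) n) =
      pr N (∑ p : (Fin a → Fin N) × (Fin b → Fin N),
        if StrictMono p.1 ∧ StrictMono p.2 ∧ (∀ i j, p.1 i ≠ p.2 j) ∧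
            (∀ j : Fin b, p.1 ⟨0, ha⟩ < p.2 j) ∧
            (∀ i, (p.1 i : ℕ) < n ⟨0, Nat.succ_pos b⟩) ∧
            (∀ j : Fin b, (p.2 j : ℕ) < n ⟨(j : ℕ) + 1, Nat.succ_lt_succ j.isLt⟩)
        then word N ((List.ofFn p.1).reverse ++ List.ofFn p.2) else 0)) ∧
    ∃ m : Multiset (List (Fin N)),
      pr N (Jflag N (b + 1) (hookComp a b) (fun _ => N)) =
        pr N ((m.map (word N)).sum) := by
  obtain ⟨a, rfl⟩ := Nat.exists_eq_add_one.2 ha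
  refine ⟨?_, ?_⟩
  · rw [pr_Jflag_hookComp a b n hn, pr_wordSum_congr fun p hp => isFlaggedHook_iff_of_nodup hp]
    exact congrArg _ (sum_ite_word_eq_wordSum _ _).symm
  · obtain ⟨m, hm⟩ := exists_multiset_wordSum (IsFlaggedHook a b fun _ => N) creading
    exact ⟨m, by rw [pr_Jflag_hookComp a b _ monotone_const, hm]⟩

end
end

section
/- For a subset W of the set W_n of length-n words with no repeated letter, the vector Σ_{w ∈ W} w lies in (I_RKst)^⊥ if and only if for every KR square X of W_n, the intersection W ∩ X is empty, all of X, or one of the four 2-element subsets {v·bac·w, v·bca·w}, {v·acb·w, v·cab·w}, {v·bac·w, v·acb·w}, {v·bca·w, v·cab·w}. -/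
open scoped Classical

noncomputable section

/-- The monomial corresponding to a word, in the monoid algebra realization
`U = ℤ⟨u_1, …, u_N⟩ = ℤ[FreeMonoid (Fin N)]`. -/
def mono (N : ℕ) (l : List (Fin N)) : MonoidAlgebra ℤ (FreeMonoid (Fin N)) :=
  MonoidAlgebra.single (FreeMonoid.ofList l) 1

/-- The generating relations of the two-sided ideal `I_RKst`:
`bac − bca − acb + cab = 0` for letters `a < b < c` (this is
`u_b(u_au_c − u_cu_a) − (u_au_c − u_cu_a)u_b = 0`), and `w = 0` for every word `w` with a
repeated letter. -/
inductive RKRelM (N : ℕ) :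
    MonoidAlgebra ℤ (FreeMonoid (Fin N)) → MonoidAlgebra ℤ (FreeMonoid (Fin N)) → Prop
  | knuth_rotation (a b c : Fin N) (hab : a < b) (hbc : b < c) :
      RKRelM N (mono N [b, a, c] - mono N [b, c, a] - mono N [a, c, b] + mono N [c, a, b]) 0
  | repeated (l : List (Fin N)) (h : ¬ l.Nodup) : RKRelM N (mono N l) 0

/-!
A functional `φ` on a ring is constant on the classes of the ring congruence generated by a
relation `r` as soon as `φ (a * x * b) = φ (a * y * b)` for every `r x y` and all `a, b`: such
pairs `(x, y)` form a ring congruence themselves. In a monoid algebra it suffices to take `a`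
and `b` monomials. For `φ = ∑_{w ∈ W} ⟨·, w⟩` and the generators of `I_RKst`, the monomial
sandwiches of the Knuth–rotation relations are exactly the vectors `h_X`, on which `φ` is a
signed sum of four indicators; this vanishes precisely in the six listed patterns. The
sandwiches of words with a repeated letter, and the `h_X` whose words lie outside `W_n`, are
killed automatically because `W ⊆ W_n` and `W_n` is closed under permutations of letters.
-/

section SandwichCon

variable {R M : Type*} [Semiring R] [AddCommMonoid M]

def sandwichCon (φ : R →+ M) : RingCon R where
  r x y := ∀ a b, φ (a * x * b) = φ (a * y * b)
  iseqv := ⟨fun _ _ _ => rfl, fun h a b => (h a b).symm, fun h₁ h₂ a b => (h₁ a b).trans (h₂ a b)⟩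
  mul' {x y z w} h₁ h₂ a b := by
    calc φ (a * (x * z) * b) = φ (a * x * (z * b)) := by simp only [mul_assoc]
      _ = φ (a * y * (z * b)) := h₁ _ _
      _ = φ (a * y * z * b) := by simp only [mul_assoc]
      _ = φ (a * y * w * b) := h₂ _ _
      _ = φ (a * (y * w) * b) := by simp only [mul_assoc]
  add' h₁ h₂ a b := by simp only [mul_add, add_mul, map_add, h₁ a b, h₂ a b]

theorem map_eq_of_ringConGen {r : R → R → Prop} {φ : R →+ M}
    (h : ∀ x y, r x y → ∀ a b, φ (a * x * b) = φ (a * y * b)) {x y : R}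
    (hxy : ringConGen r x y) : φ x = φ y := by
  simpa using (RingCon.ringConGen_le (c := sandwichCon φ)).2 h hxy 1 1

end SandwichCon

namespace MonoidAlgebra

variable {k G M : Type*} [CommSemiring k]

def coeffSum (W : Finset G) : MonoidAlgebra k G →ₗ[k] k :=
  ∑ x ∈ W, Finsupp.lapply x ∘ₗ (coeffLinearEquiv k).toLinearMap

theorem coeffSum_apply (W : Finset G) (z : MonoidAlgebra k G) :
    coeffSum W z = ∑ x ∈ W, z.coeff x := by
  simp [coeffSum]

theorem coeffSum_single_one (W : Finset G) (g : G) [Decidable (g ∈ W)] :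
    coeffSum W (single g (1 : k)) = if g ∈ W then 1 else 0 := by
  simp [coeffSum_apply, coeff_single, Finsupp.single_apply]

variable [Monoid G]

theorem map_mul_mul_eq_of_forall_of [AddCommMonoid M] [Module k M]
    (φ : MonoidAlgebra k G →ₗ[k] M) {x y : MonoidAlgebra k G}
    (h : ∀ m m', φ (of k G m * x * of k G m') = φ (of k G m * y * of k G m'))
    (a b : MonoidAlgebra k G) : φ (a * x * b) = φ (a * y * b) := by
  induction a using MonoidAlgebra.induction_on with
  | of m =>
    induction b using MonoidAlgebra.induction_on with
    | of m' => exact h m m'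
    | add b b' hb hb' => simp only [mul_add, map_add, hb, hb']
    | smul r b hb => simp only [mul_smul_comm, map_smul, hb]
  | add a a' ha ha' => simp only [add_mul, map_add, ha, ha']
  | smul r a ha => simp only [smul_mul_assoc, map_smul, ha]

theorem forall_ringConGen_map_eq_zero_iff {k : Type*} [CommRing k] [AddCommGroup M] [Module k M]
    (r : MonoidAlgebra k G → MonoidAlgebra k G → Prop) (φ : MonoidAlgebra k G →ₗ[k] M) :
    (∀ z, ringConGen r z 0 → φ z = 0) ↔
      ∀ x y, r x y → ∀ m m', φ (of k G m * x * of k G m') = φ (of k G m * y * of k G m') := by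
  constructor
  · intro h x y hxy m m'
    have hrel := (ringConGen r).mul ((ringConGen r).mul ((ringConGen r).refl (of k G m))
      (RingConGen.Rel.of _ _ hxy)) ((ringConGen r).refl (of k G m'))
    have hsub := (ringConGen r).sub hrel ((ringConGen r).refl (of k G m * y * of k G m'))
    rw [sub_self] at hsub
    rw [← sub_eq_zero, ← map_sub]
    exact h _ hsub
  · intro h z hz
    simpa using map_eq_of_ringConGen (φ := φ.toAddMonoidHom)
      (fun x y hxy => map_mul_mul_eq_of_forall_of φ (h x y hxy)) hz

end MonoidAlgebra

theorem ite_sub_ite_sub_ite_add_ite_eq_zero_iff (p q r s : Prop) [Decidable p] [Decidable q]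
    [Decidable r] [Decidable s] :
    (if p then 1 else 0 : ℤ) - (if q then 1 else 0) - (if r then 1 else 0) +
        (if s then 1 else 0) = 0 ↔
      (¬p ∧ ¬q ∧ ¬r ∧ ¬s) ∨ (p ∧ q ∧ r ∧ s) ∨ (p ∧ q ∧ ¬r ∧ ¬s) ∨ (¬p ∧ ¬q ∧ r ∧ s) ∨
        (p ∧ ¬q ∧ r ∧ ¬s) ∨ (¬p ∧ q ∧ ¬r ∧ s) := by
  by_cases p <;> by_cases q <;> by_cases r <;> by_cases s <;> simp [*]

section Monomials

variable {N : ℕ}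

theorem mono_append (v w : List (Fin N)) : mono N (v ++ w) = mono N v * mono N w := by
  simp [mono, MonoidAlgebra.single_mul_single, FreeMonoid.ofList_append]

theorem of_eq_mono (m : FreeMonoid (Fin N)) :
    MonoidAlgebra.of ℤ (FreeMonoid (Fin N)) m = mono N m.toList := by
  simp [mono]

theorem mono_mul_knuth_mul_mono (v w : List (Fin N)) (a b c : Fin N) :
    mono N v * (mono N [b, a, c] - mono N [b, c, a] - mono N [a, c, b] + mono N [c, a, b]) *
        mono N w =
      mono N (v ++ [b, a, c] ++ w) - mono N (v ++ [b, c, a] ++ w) -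
        mono N (v ++ [a, c, b] ++ w) + mono N (v ++ [c, a, b] ++ w) := by
  simp only [mul_sub, sub_mul, mul_add, add_mul, mono_append]

theorem coeffSum_mono (W : Finset (FreeMonoid (Fin N))) (l : List (Fin N)) :
    MonoidAlgebra.coeffSum W (mono N l) = if FreeMonoid.ofList l ∈ W then 1 else 0 :=
  MonoidAlgebra.coeffSum_single_one W _

end Monomials

section NodupWords

variable {N n : ℕ} {W : Finset (FreeMonoid (Fin N))}
  (hW : ∀ x ∈ W, (FreeMonoid.toList x).length = n ∧ (FreeMonoid.toList x).Nodup)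
include hW

theorem nodup_length_of_perm_of_mem {u u' : List (Fin N)} (hperm : u.Perm u')
    (hu : FreeMonoid.ofList u ∈ W) : u'.Nodup ∧ u'.length = n := by
  obtain ⟨hlen, hnd⟩ := hW _ hu
  rw [FreeMonoid.toList_ofList] at hlen hnd
  exact ⟨hperm.nodup_iff.mp hnd, hperm.length_eq ▸ hlen⟩

theorem ofList_append_not_mem {l : List (Fin N)} (hl : ¬l.Nodup) (v w : List (Fin N)) :
    FreeMonoid.ofList (v ++ l ++ w) ∉ W := fun hmem =>
  hl ((nodup_length_of_perm_of_mem hW (.refl _) hmem).1.sublist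
    (List.infix_append v l w).sublist)

end NodupWords

/-- For `W` a set of words of length `n` with no repeated letter, the element
`∑_{w ∈ W} w` lies in `(I_RKst)^⊥` (with respect to the bilinear form making words an
orthonormal basis; membership in `I_RKst` is the congruence class of `0` under the ring
congruence generated by the relations) if and only if for every KR square
`X = {v·bac·w, v·bca·w, v·acb·w, v·cab·w}` of `W_n`, the intersection `W ∩ X` is empty,
all of `X`, or one of the four 2-element subsets `{v·bac·w, v·bca·w}`,
`{v·acb·w, v·cab·w}`, `{v·bac·w, v·acb·w}`, `{v·bca·w, v·cab·w}`. -/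
theorem KRset_iff_orthogonal (N n : ℕ) (W : Finset (FreeMonoid (Fin N)))
    (hW : ∀ x ∈ W, (FreeMonoid.toList x).length = n ∧ (FreeMonoid.toList x).Nodup) :
    (∀ z : MonoidAlgebra ℤ (FreeMonoid (Fin N)),
        ringConGen (RKRelM N) z 0 → ∑ x ∈ W, z.coeff x = 0) ↔
      (∀ (a b c : Fin N) (v w : List (Fin N)), a < b → b < c →
        (v ++ [b, a, c] ++ w).Nodup → (v ++ [b, a, c] ++ w).length = n →
        ((FreeMonoid.ofList (v ++ [b, a, c] ++ w) ∉ W ∧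
          FreeMonoid.ofList (v ++ [b, c, a] ++ w) ∉ W ∧
          FreeMonoid.ofList (v ++ [a, c, b] ++ w) ∉ W ∧
          FreeMonoid.ofList (v ++ [c, a, b] ++ w) ∉ W) ∨
         (FreeMonoid.ofList (v ++ [b, a, c] ++ w) ∈ W ∧
          FreeMonoid.ofList (v ++ [b, c, a] ++ w) ∈ W ∧
          FreeMonoid.ofList (v ++ [a, c, b] ++ w) ∈ W ∧
          FreeMonoid.ofList (v ++ [c, a, b] ++ w) ∈ W) ∨
         (FreeMonoid.ofList (v ++ [b, a, c] ++ w) ∈ W ∧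
          FreeMonoid.ofList (v ++ [b, c, a] ++ w) ∈ W ∧
          FreeMonoid.ofList (v ++ [a, c, b] ++ w) ∉ W ∧
          FreeMonoid.ofList (v ++ [c, a, b] ++ w) ∉ W) ∨
         (FreeMonoid.ofList (v ++ [b, a, c] ++ w) ∉ W ∧
          FreeMonoid.ofList (v ++ [b, c, a] ++ w) ∉ W ∧
          FreeMonoid.ofList (v ++ [a, c, b] ++ w) ∈ W ∧
          FreeMonoid.ofList (v ++ [c, a, b] ++ w) ∈ W) ∨
         (FreeMonoid.ofList (v ++ [b, a, c] ++ w) ∈ W ∧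
          FreeMonoid.ofList (v ++ [b, c, a] ++ w) ∉ W ∧
          FreeMonoid.ofList (v ++ [a, c, b] ++ w) ∈ W ∧
          FreeMonoid.ofList (v ++ [c, a, b] ++ w) ∉ W) ∨
         (FreeMonoid.ofList (v ++ [b, a, c] ++ w) ∉ W ∧
          FreeMonoid.ofList (v ++ [b, c, a] ++ w) ∈ W ∧
          FreeMonoid.ofList (v ++ [a, c, b] ++ w) ∉ W ∧
          FreeMonoid.ofList (v ++ [c, a, b] ++ w) ∈ W))) := by
  simp_rw [← MonoidAlgebra.coeffSum_apply, MonoidAlgebra.forall_ringConGen_map_eq_zero_iff,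
    of_eq_mono]
  constructor
  · intro h a b c v w hab hbc _ _
    have hX := h _ _ (.knuth_rotation a b c hab hbc) (.ofList v) (.ofList w)
    simp only [FreeMonoid.toList_ofList, mono_mul_knuth_mul_mono, coeffSum_mono,
      mul_zero, zero_mul, map_zero, map_add, map_sub] at hX
    exact (ite_sub_ite_sub_ite_add_ite_eq_zero_iff ..).1 hX
  · rintro h _ _ (⟨a, b, c, hab, hbc⟩ | ⟨l, hl⟩) m m'
    · simp only [mono_mul_knuth_mul_mono, coeffSum_mono, mul_zero, zero_mul,
        map_zero, map_add, map_sub]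
      refine (ite_sub_ite_sub_ite_add_ite_eq_zero_iff ..).2 ?_
      by_cases hgood : (m.toList ++ [b, a, c] ++ m'.toList).Nodup ∧
          (m.toList ++ [b, a, c] ++ m'.toList).length = n
      · exact h a b c _ _ hab hbc hgood.1 hgood.2
      · have hout {u} (hu : u.Perm (m.toList ++ [b, a, c] ++ m'.toList)) :
            FreeMonoid.ofList u ∉ W := fun hmem =>
          hgood (nodup_length_of_perm_of_mem hW hu hmem)
        refine Or.inl ⟨hout (.refl _), hout ?_, hout ?_, hout ?_⟩ <;>
          exact .append_right _ (.append_left _ (by grind))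
    · rw [← mono_append, ← mono_append, coeffSum_mono, mul_zero,
        zero_mul, map_zero, if_neg (ofList_append_not_mem hW hl _ _)]

end
end

section
/- The relations of the algebra U_q/J_Lam^(k) imply the Knuth-rotation relations: in U_q/J_Lam^(k), for letters a < b < c with c − a ≤ k, one has bac = acb and bca = cab; and for c − a > k, one has bac = bca and acb = cab. Consequently U_q/J_Lam^(k) is a quotient of Q(q) ⊗ (U/I_Assaf^(k)). -/
open scoped Classical

noncomputable section

/-- A word in the free associative algebra `U_q = ℚ(q)⟨u_1, …, u_N⟩`, with coefficients
in the field `ℚ(q)` of rational functions. -/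
def wordq (N : ℕ) (l : List (Fin N)) : FreeAlgebra (RatFunc ℚ) (Fin N) :=
  (l.map (FreeAlgebra.ι (RatFunc ℚ))).prod

/-- The defining relations of Lam's algebra `U_q/J_Lam^(k)`:
`u_a u_c = u_c u_a` for `c − a > k`, `u_a u_b = q⁻¹ u_b u_a` for `0 < b − a < k`, and
`w = 0` for words `w` with a repeated letter. -/
inductive LamRel (N k : ℕ) :
    FreeAlgebra (RatFunc ℚ) (Fin N) → FreeAlgebra (RatFunc ℚ) (Fin N) → Prop
  | far (a c : Fin N) (h : (a : ℕ) + k < (c : ℕ)) :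
      LamRel N k (wordq N [a, c]) (wordq N [c, a])
  | near (a b : Fin N) (h1 : a < b) (h2 : (b : ℕ) < (a : ℕ) + k) :
      LamRel N k (wordq N [a, b]) (((RatFunc.X : RatFunc ℚ))⁻¹ • wordq N [b, a])
  | repeated (l : List (Fin N)) (h : ¬ l.Nodup) : LamRel N k (wordq N l) 0

/-- The defining relations of Assaf's algebra `U/I_Assaf^(k)` (here base-changed to the
coefficient field `ℚ(q)`): `bac = bca` and `acb = cab` for `c − a > k`, `bac = acb` and
`bca = cab` for `c − a ≤ k` (`a < b < c`), and words with a repeated letter are `0`. -/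
inductive AssafRel (N k : ℕ) :
    FreeAlgebra (RatFunc ℚ) (Fin N) → FreeAlgebra (RatFunc ℚ) (Fin N) → Prop
  | far_knuth1 (a b c : Fin N) (hab : a < b) (hbc : b < c) (h : (a : ℕ) + k < (c : ℕ)) :
      AssafRel N k (wordq N [b, a, c]) (wordq N [b, c, a])
  | far_knuth2 (a b c : Fin N) (hab : a < b) (hbc : b < c) (h : (a : ℕ) + k < (c : ℕ)) :
      AssafRel N k (wordq N [a, c, b]) (wordq N [c, a, b])
  | near_rot1 (a b c : Fin N) (hab : a < b) (hbc : b < c) (h : (c : ℕ) ≤ (a : ℕ) + k) :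
      AssafRel N k (wordq N [b, a, c]) (wordq N [a, c, b])
  | near_rot2 (a b c : Fin N) (hab : a < b) (hbc : b < c) (h : (c : ℕ) ≤ (a : ℕ) + k) :
      AssafRel N k (wordq N [b, c, a]) (wordq N [c, a, b])
  | repeated (l : List (Fin N)) (h : ¬ l.Nodup) : AssafRel N k (wordq N l) 0


section Aux

variable (N k : ℕ)

private lemma mk_word3 (x y z : Fin N) :
    RingQuot.mkAlgHom (RatFunc ℚ) (LamRel N k) (wordq N [x, y, z]) =
      RingQuot.mkAlgHom (RatFunc ℚ) (LamRel N k) (FreeAlgebra.ι (RatFunc ℚ) x) *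
      RingQuot.mkAlgHom (RatFunc ℚ) (LamRel N k) (FreeAlgebra.ι (RatFunc ℚ) y) *
      RingQuot.mkAlgHom (RatFunc ℚ) (LamRel N k) (FreeAlgebra.ι (RatFunc ℚ) z) := by
  simp [wordq, map_mul, mul_assoc]

private lemma mk_near (a b : Fin N) (h1 : a < b) (h2 : (b : ℕ) < (a : ℕ) + k) :
    RingQuot.mkAlgHom (RatFunc ℚ) (LamRel N k) (FreeAlgebra.ι (RatFunc ℚ) a) *
      RingQuot.mkAlgHom (RatFunc ℚ) (LamRel N k) (FreeAlgebra.ι (RatFunc ℚ) b) =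
    (RatFunc.X : RatFunc ℚ)⁻¹ •
      (RingQuot.mkAlgHom (RatFunc ℚ) (LamRel N k) (FreeAlgebra.ι (RatFunc ℚ) b) *
        RingQuot.mkAlgHom (RatFunc ℚ) (LamRel N k) (FreeAlgebra.ι (RatFunc ℚ) a)) := by
  have h := RingQuot.mkAlgHom_rel (RatFunc ℚ) (LamRel.near a b h1 h2)
  simpa [wordq, map_mul, map_smul] using h

private lemma mk_near' (a b : Fin N) (h1 : a < b) (h2 : (b : ℕ) < (a : ℕ) + k) :
    RingQuot.mkAlgHom (RatFunc ℚ) (LamRel N k) (FreeAlgebra.ι (RatFunc ℚ) b) *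
      RingQuot.mkAlgHom (RatFunc ℚ) (LamRel N k) (FreeAlgebra.ι (RatFunc ℚ) a) =
    (RatFunc.X : RatFunc ℚ) •
      (RingQuot.mkAlgHom (RatFunc ℚ) (LamRel N k) (FreeAlgebra.ι (RatFunc ℚ) a) *
        RingQuot.mkAlgHom (RatFunc ℚ) (LamRel N k) (FreeAlgebra.ι (RatFunc ℚ) b)) := by
  rw [mk_near N k a b h1 h2, smul_smul, mul_inv_cancel₀ RatFunc.X_ne_zero, one_smul]

private lemma mk_far (a c : Fin N) (h : (a : ℕ) + k < (c : ℕ)) :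
    RingQuot.mkAlgHom (RatFunc ℚ) (LamRel N k) (FreeAlgebra.ι (RatFunc ℚ) a) *
      RingQuot.mkAlgHom (RatFunc ℚ) (LamRel N k) (FreeAlgebra.ι (RatFunc ℚ) c) =
    RingQuot.mkAlgHom (RatFunc ℚ) (LamRel N k) (FreeAlgebra.ι (RatFunc ℚ) c) *
      RingQuot.mkAlgHom (RatFunc ℚ) (LamRel N k) (FreeAlgebra.ι (RatFunc ℚ) a) := by
  have h' := RingQuot.mkAlgHom_rel (RatFunc ℚ) (LamRel.far a c h)
  simpa [wordq, map_mul] using h'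

private lemma near_main (a b c : Fin N) (hab : a < b) (hbc : b < c)
    (h : (c : ℕ) ≤ (a : ℕ) + k) :
    RingQuot.mkAlgHom (RatFunc ℚ) (LamRel N k) (wordq N [b, a, c]) =
        RingQuot.mkAlgHom (RatFunc ℚ) (LamRel N k) (wordq N [a, c, b]) ∧
      RingQuot.mkAlgHom (RatFunc ℚ) (LamRel N k) (wordq N [b, c, a]) =
        RingQuot.mkAlgHom (RatFunc ℚ) (LamRel N k) (wordq N [c, a, b]) := by
  have hb : (b : ℕ) < (a : ℕ) + k := lt_of_lt_of_le (Fin.lt_iff_val_lt_val.mp hbc) h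
  have hc : (c : ℕ) < (b : ℕ) + k :=
    lt_of_le_of_lt h (Nat.add_lt_add_right (Fin.lt_iff_val_lt_val.mp hab) k)
  set A := RingQuot.mkAlgHom (RatFunc ℚ) (LamRel N k) (FreeAlgebra.ι (RatFunc ℚ) a) with hA
  set B := RingQuot.mkAlgHom (RatFunc ℚ) (LamRel N k) (FreeAlgebra.ι (RatFunc ℚ) b) with hB
  set C := RingQuot.mkAlgHom (RatFunc ℚ) (LamRel N k) (FreeAlgebra.ι (RatFunc ℚ) c) with hC
  have h1 : B * A = (RatFunc.X : RatFunc ℚ) • (A * B) := mk_near' N k a b hab hb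
  have h1' : A * B = (RatFunc.X : RatFunc ℚ)⁻¹ • (B * A) := mk_near N k a b hab hb
  have h2 : C * B = (RatFunc.X : RatFunc ℚ) • (B * C) := mk_near' N k b c hbc hc
  have h2' : B * C = (RatFunc.X : RatFunc ℚ)⁻¹ • (C * B) := mk_near N k b c hbc hc
  constructor
  · rw [mk_word3, mk_word3, ← hA, ← hB, ← hC]
    calc B * A * C = ((RatFunc.X : RatFunc ℚ) • (A * B)) * C := by rw [h1]
      _ = (RatFunc.X : RatFunc ℚ) • (A * (B * C)) := by rw [smul_mul_assoc, mul_assoc]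
      _ = (RatFunc.X : RatFunc ℚ) • (A * ((RatFunc.X : RatFunc ℚ)⁻¹ • (C * B))) := by
          rw [h2']
      _ = A * C * B := by
          rw [mul_smul_comm, smul_smul, mul_inv_cancel₀ RatFunc.X_ne_zero, one_smul,
            mul_assoc]
  · rw [mk_word3, mk_word3, ← hA, ← hB, ← hC]
    calc B * C * A = ((RatFunc.X : RatFunc ℚ)⁻¹ • (C * B)) * A := by rw [h2']
      _ = (RatFunc.X : RatFunc ℚ)⁻¹ • (C * (B * A)) := by rw [smul_mul_assoc, mul_assoc]
      _ = (RatFunc.X : RatFunc ℚ)⁻¹ • (C * ((RatFunc.X : RatFunc ℚ) • (A * B))) := by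
          rw [h1]
      _ = C * A * B := by
          rw [mul_smul_comm, smul_smul, inv_mul_cancel₀ RatFunc.X_ne_zero, one_smul,
            mul_assoc]

private lemma far_main (a b c : Fin N) (hab : a < b) (hbc : b < c)
    (h : (a : ℕ) + k < (c : ℕ)) :
    RingQuot.mkAlgHom (RatFunc ℚ) (LamRel N k) (wordq N [b, a, c]) =
        RingQuot.mkAlgHom (RatFunc ℚ) (LamRel N k) (wordq N [b, c, a]) ∧
      RingQuot.mkAlgHom (RatFunc ℚ) (LamRel N k) (wordq N [a, c, b]) =
        RingQuot.mkAlgHom (RatFunc ℚ) (LamRel N k) (wordq N [c, a, b]) := by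
  have hf := mk_far N k a c h
  constructor
  · rw [mk_word3, mk_word3, mul_assoc, hf, mul_assoc]
  · rw [mk_word3, mk_word3, hf]

end Aux

/-- In `U_q/J_Lam^(k)`: for letters `a < b < c` with `c − a ≤ k` one has `bac = acb` and
`bca = cab`, and for `c − a > k` one has `bac = bca` and `acb = cab`.  Consequently
`U_q/J_Lam^(k)` is a quotient of `ℚ(q) ⊗ (U/I_Assaf^(k))`. -/
theorem lamRel_implies_assafRel (N k : ℕ) :
    (∀ a b c : Fin N, a < b → b < c → (c : ℕ) ≤ (a : ℕ) + k →
      RingQuot.mkAlgHom (RatFunc ℚ) (LamRel N k) (wordq N [b, a, c]) =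
        RingQuot.mkAlgHom (RatFunc ℚ) (LamRel N k) (wordq N [a, c, b]) ∧
      RingQuot.mkAlgHom (RatFunc ℚ) (LamRel N k) (wordq N [b, c, a]) =
        RingQuot.mkAlgHom (RatFunc ℚ) (LamRel N k) (wordq N [c, a, b])) ∧
    (∀ a b c : Fin N, a < b → b < c → (a : ℕ) + k < (c : ℕ) →
      RingQuot.mkAlgHom (RatFunc ℚ) (LamRel N k) (wordq N [b, a, c]) =
        RingQuot.mkAlgHom (RatFunc ℚ) (LamRel N k) (wordq N [b, c, a]) ∧
      RingQuot.mkAlgHom (RatFunc ℚ) (LamRel N k) (wordq N [a, c, b]) =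
        RingQuot.mkAlgHom (RatFunc ℚ) (LamRel N k) (wordq N [c, a, b])) ∧
    ∃ φ : RingQuot (AssafRel N k) →ₐ[RatFunc ℚ] RingQuot (LamRel N k),
      Function.Surjective φ ∧
      ∀ z, φ (RingQuot.mkAlgHom (RatFunc ℚ) (AssafRel N k) z) =
        RingQuot.mkAlgHom (RatFunc ℚ) (LamRel N k) z := by
  refine ⟨fun a b c hab hbc h => near_main N k a b c hab hbc h,
    fun a b c hab hbc h => far_main N k a b c hab hbc h, ?_⟩
  have hlift : ∀ x y, AssafRel N k x y →
      RingQuot.mkAlgHom (RatFunc ℚ) (LamRel N k) x =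
        RingQuot.mkAlgHom (RatFunc ℚ) (LamRel N k) y := by
    intro x y hxy
    cases hxy with
    | far_knuth1 a b c hab hbc h => exact (far_main N k a b c hab hbc h).1
    | far_knuth2 a b c hab hbc h => exact (far_main N k a b c hab hbc h).2
    | near_rot1 a b c hab hbc h => exact (near_main N k a b c hab hbc h).1
    | near_rot2 a b c hab hbc h => exact (near_main N k a b c hab hbc h).2
    | repeated l h => simpa using RingQuot.mkAlgHom_rel (RatFunc ℚ) (LamRel.repeated l h)
  refine ⟨RingQuot.liftAlgHom (RatFunc ℚ)
      ⟨RingQuot.mkAlgHom (RatFunc ℚ) (LamRel N k), hlift⟩, ?_, ?_⟩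
  · intro w
    obtain ⟨x, hx⟩ := RingQuot.mkAlgHom_surjective (RatFunc ℚ) (LamRel N k) w
    exact ⟨RingQuot.mkAlgHom (RatFunc ℚ) (AssafRel N k) x, by
      rw [RingQuot.liftAlgHom_mkAlgHom_apply, hx]⟩
  · intro z
    rw [RingQuot.liftAlgHom_mkAlgHom_apply]


end
end

section
/- For distinct letters and a word w with distinct letters of length 4 over a linearly ordered alphabet: if w_4 is the maximum or minimum letter of w, and w admits both a Knuth/rotation move at positions 1,2,3 (a 2-edge) and at positions 2,3,4 (a 3-edge), then the word E_2(w) obtained by applying the 2-edge move does not admit a 3-edge. (Formally: if exactly one of w_1<w_2, w_2<w_3 holds and exactly one of w_2<w_3, w_3<w_4 holds, and w_4 ∈ {min, max} of {w_1,w_2,w_3,w_4}, then for any w' obtained from w by a Knuth or rotation transformation at positions 1,2,3, it is not the case that exactly one of w'_2<w'_3, w'_3<w'_4 holds.) -/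
/-!
A Knuth or rotation move at positions `1, 2, 3` always reverses the relative order of the
letters in positions `2, 3`, and it only permutes the first three letters, so it does not
change how `w₃'` compares with `w₄` when `w₄` is the maximum or minimum of the word.
If `w₄` is the maximum, the 3-edge of `w` forces `w₂ > w₃`, hence `w₂' < w₃' < w₄`;
if `w₄` is the minimum, it forces `w₂ < w₃`, hence `w₂' > w₃' > w₄`. Either way `w'` has
no 3-edge.
-/

/-- A Knuth or rotation transformation on a triple of distinct letters:
Knuth moves `bac ↔ bca`, `acb ↔ cab`; rotation moves `bac ↔ acb`, `bca ↔ cab`,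
for letters `a < b < c`. -/
def KRstep {α : Type*} [LinearOrder α] (p q : α × α × α) : Prop :=
  ∃ a b c : α, a < b ∧ b < c ∧
    ((p = (b, a, c) ∧ q = (b, c, a)) ∨ (p = (b, c, a) ∧ q = (b, a, c)) ∨
     (p = (a, c, b) ∧ q = (c, a, b)) ∨ (p = (c, a, b) ∧ q = (a, c, b)) ∨
     (p = (b, a, c) ∧ q = (a, c, b)) ∨ (p = (a, c, b) ∧ q = (b, a, c)) ∨
     (p = (b, c, a) ∧ q = (c, a, b)) ∨ (p = (c, a, b) ∧ q = (b, c, a)))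

namespace KRstep

variable {α : Type*} [LinearOrder α] {x₁ x₂ x₃ y₁ y₂ y₃ : α}

theorem lt_iff_not_lt (h : KRstep (x₁, x₂, x₃) (y₁, y₂, y₃)) : x₂ < x₃ ↔ ¬ y₂ < y₃ := by
  obtain ⟨a, b, c, hab, hbc, hcases⟩ := h
  simp only [Prod.mk.injEq] at hcases
  rcases hcases with ⟨⟨rfl, rfl, rfl⟩, rfl, rfl, rfl⟩ | ⟨⟨rfl, rfl, rfl⟩, rfl, rfl, rfl⟩ |
    ⟨⟨rfl, rfl, rfl⟩, rfl, rfl, rfl⟩ | ⟨⟨rfl, rfl, rfl⟩, rfl, rfl, rfl⟩ |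
    ⟨⟨rfl, rfl, rfl⟩, rfl, rfl, rfl⟩ | ⟨⟨rfl, rfl, rfl⟩, rfl, rfl, rfl⟩ |
    ⟨⟨rfl, rfl, rfl⟩, rfl, rfl, rfl⟩ | ⟨⟨rfl, rfl, rfl⟩, rfl, rfl, rfl⟩ <;>
  constructor <;> intro <;> order

theorem third_eq (h : KRstep (x₁, x₂, x₃) (y₁, y₂, y₃)) : y₃ = x₁ ∨ y₃ = x₂ ∨ y₃ = x₃ := by
  obtain ⟨a, b, c, -, -, hcases⟩ := h
  simp only [Prod.mk.injEq] at hcases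
  rcases hcases with ⟨⟨rfl, rfl, rfl⟩, rfl, rfl, rfl⟩ | ⟨⟨rfl, rfl, rfl⟩, rfl, rfl, rfl⟩ |
    ⟨⟨rfl, rfl, rfl⟩, rfl, rfl, rfl⟩ | ⟨⟨rfl, rfl, rfl⟩, rfl, rfl, rfl⟩ |
    ⟨⟨rfl, rfl, rfl⟩, rfl, rfl, rfl⟩ | ⟨⟨rfl, rfl, rfl⟩, rfl, rfl, rfl⟩ |
    ⟨⟨rfl, rfl, rfl⟩, rfl, rfl, rfl⟩ | ⟨⟨rfl, rfl, rfl⟩, rfl, rfl, rfl⟩ <;>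
  simp

end KRstep

theorem E2_no_3_edge_general {α : Type*} [LinearOrder α] (w1 w2 w3 w4 w1' w2' w3' : α)
    (hmaxmin : (w1 < w4 ∧ w2 < w4 ∧ w3 < w4) ∨ (w4 < w1 ∧ w4 < w2 ∧ w4 < w3))
    (h3edge : Xor' (w2 < w3) (w3 < w4))
    (hstep : KRstep (w1, w2, w3) (w1', w2', w3')) :
    ¬ Xor' (w2' < w3') (w3' < w4) := by
  have hflip := hstep.lt_iff_not_lt
  replace h3edge := (xor_iff_not_iff _ _).mp h3edge
  refine (not_xor _ _).mpr ?_
  rcases hmaxmin with ⟨h1, h2, h3⟩ | ⟨h1, h2, h3⟩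
  · have hw3' : w3' < w4 := by rcases hstep.third_eq with rfl | rfl | rfl <;> assumption
    tauto
  · have hw3' : w4 < w3' := by rcases hstep.third_eq with rfl | rfl | rfl <;> assumption
    have h3_not_lt : ¬ w3 < w4 := lt_asymm h3
    have hw3'_not_lt : ¬ w3' < w4 := lt_asymm hw3'
    tauto

/-- Let `w = w₁w₂w₃w₄` be a word with distinct letters such that `w₄` is the maximum or
minimum letter of `w`.  If `w` admits both a 2-edge (exactly one of `w₁ < w₂`, `w₂ < w₃`
holds) and a 3-edge (exactly one of `w₂ < w₃`, `w₃ < w₄` holds), then any word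
`w' = w₁'w₂'w₃'w₄` obtained from `w` by a Knuth or rotation transformation at positions
`1, 2, 3` does not admit a 3-edge. -/
theorem E2_no_3_edge {α : Type*} [LinearOrder α] (w1 w2 w3 w4 w1' w2' w3' : α)
    (h12 : w1 ≠ w2) (h13 : w1 ≠ w3) (h14 : w1 ≠ w4)
    (h23 : w2 ≠ w3) (h24 : w2 ≠ w4) (h34 : w3 ≠ w4)
    (hmaxmin : (w1 < w4 ∧ w2 < w4 ∧ w3 < w4) ∨ (w4 < w1 ∧ w4 < w2 ∧ w4 < w3))
    (h2edge : Xor' (w1 < w2) (w2 < w3))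
    (h3edge : Xor' (w2 < w3) (w3 < w4))
    (hstep : KRstep (w1, w2, w3) (w1', w2', w3')) :
    ¬ Xor' (w2' < w3') (w3' < w4) :=
  E2_no_3_edge_general w1 w2 w3 w4 w1' w2' w3' hmaxmin h3edge hstep
end
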